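/- The diamond norm of a cq-map equals the maximum trace norm of its defining operators: for A = {A_1, …, A_n} ⊂ B_h(K) and φ_A^{cq}: X ↦ Σ_i ⟨e_i, X e_i⟩ A_i from B(ℂⁿ) to B(K), one has ‖φ_A^{cq}‖_⋄ = max_i ‖A_i‖_1. -/

import Mathlib

/-! For Hermitian `A` one has `|A| ± A ≥ 0` with `tr |A| = ‖A‖₁`, and conversely `B ± A ≥ 0`
forces `‖A‖₁ ≤ Re tr B`, by comparing diagonal entries in an eigenbasis of `A`. If
`rα ± φ_A` are completely positive for a channel `α`, evaluating at `E_ii` gives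
`r α(E_ii) ± A_i ≥ 0` with `tr (r α(E_ii)) = r`, hence `‖A_i‖₁ ≤ r`. Conversely, for
`r ≥ max_i ‖A_i‖₁` the cq-channel with states `(|A_i| + c_i 1) / r`, where `c_i ≥ 0` pads the
trace to `r`, satisfies `rα ± φ_A = φ^{cq}_{|A_i| ± A_i + c_i 1}`, which is completely positive. -/

open scoped Matrix Kronecker ComplexOrder Matrix.Norms.L2Operator

noncomputable section

/-- Square complex matrices indexed by `ι`. -/
abbrev Mat (ι : Type) [Fintype ι] [DecidableEq ι] : Type := Matrix ι ι ℂ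

/-- Linear maps between matrix algebras. -/
abbrev MatMap (ι κ : Type) [Fintype ι] [DecidableEq ι] [Fintype κ] [DecidableEq κ] : Type :=
  Mat ι →ₗ[ℂ] Mat κ

variable {ι κ μ ν : Type} [Fintype ι] [DecidableEq ι] [Fintype κ] [DecidableEq κ]
  [Fintype μ] [DecidableEq μ] [Fintype ν] [DecidableEq ν]

/-- `φ ⊗ id_τ`, the amplification of `φ` with the identity on `Mat τ`. -/
def tensorId (φ : MatMap ι κ) (τ : Type) [Fintype τ] [DecidableEq τ] :
    Matrix (ι × τ) (ι × τ) ℂ →ₗ[ℂ] Matrix (κ × τ) (κ × τ) ℂ where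
  toFun X := Matrix.of fun p q => φ (Matrix.of fun i j => X (i, p.2) (j, q.2)) p.1 q.1
  map_add' X Y := by
    funext p q
    show φ (Matrix.of fun i j => (X + Y) (i, p.2) (j, q.2)) p.1 q.1 = _
    rw [show (Matrix.of fun i j => (X + Y) (i, p.2) (j, q.2))
        = (Matrix.of fun i j => X (i, p.2) (j, q.2))
          + (Matrix.of fun i j => Y (i, p.2) (j, q.2)) from rfl, map_add]
    rfl
  map_smul' c X := by
    funext p q
    show φ (Matrix.of fun i j => (c • X) (i, p.2) (j, q.2)) p.1 q.1 = _
    rw [show (Matrix.of fun i j => (c • X) (i, p.2) (j, q.2))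
        = c • (Matrix.of fun i j => X (i, p.2) (j, q.2)) from rfl, map_smul]
    rfl

/-- `φ` is Hermitian-preserving. -/
def IsHermitianPreserving (φ : MatMap ι κ) : Prop := ∀ X, (φ X)ᴴ = φ Xᴴ

/-- `φ` is completely positive: all amplifications by finite-dimensional identities
preserve positive semidefiniteness. -/
def IsCP (φ : MatMap ι κ) : Prop :=
  ∀ (l : ℕ) (X : Matrix (ι × Fin l) (ι × Fin l) ℂ), X.PosSemidef →
    (tensorId φ (Fin l) X).PosSemidef

/-- `φ` is trace-preserving. -/
def IsTP (φ : MatMap ι κ) : Prop := ∀ X, (φ X).trace = X.trace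

/-- A channel is a completely positive trace-preserving map. -/
def IsChannel (φ : MatMap ι κ) : Prop := IsCP φ ∧ IsTP φ

/-- Density operator. -/
def IsState (σ : Mat ι) : Prop := σ.PosSemidef ∧ σ.trace = 1

/-- The Choi matrix of `φ`. -/
def choiMatrix (φ : MatMap ι κ) : Matrix (κ × ι) (κ × ι) ℂ :=
  Matrix.of fun p q => φ (Matrix.single p.2 q.2 1) p.1 q.1

/-- The tracelike functional `s`. -/
def sFun (φ : MatMap ι ι) : ℂ :=
  ∑ i, ∑ j, φ (Matrix.single i j 1) i j

/-- The pairing `⟨ψ, φ⟩ = s(ψ ∘ φ)`. -/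
def pairing (ψ : MatMap κ ι) (φ : MatMap ι κ) : ℂ := sFun (ψ ∘ₗ φ)

/-- The erasure map `A ↦ Tr[A] σ`. -/
def erasure (σ : Mat κ) : MatMap ι κ :=
  (Matrix.traceLinearMap ι ℂ ℂ).smulRight σ

/-- The diamond norm, via its order-theoretic characterization. -/
noncomputable def diamondNorm (φ : MatMap ι κ) : ℝ :=
  sInf {r : ℝ | 0 < r ∧ ∃ α : MatMap ι κ, IsChannel α ∧
    IsCP ((r : ℂ) • α - φ) ∧ IsCP ((r : ℂ) • α + φ)}

/-- The dual diamond norm, via its order-theoretic characterization. -/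
noncomputable def dualDiamondNorm (ψ : MatMap ι κ) : ℝ :=
  sInf {r : ℝ | 0 < r ∧ ∃ σ : Mat κ, IsState σ ∧
    IsCP ((r : ℂ) • erasure (ι := ι) σ - ψ) ∧ IsCP ((r : ℂ) • erasure (ι := ι) σ + ψ)}

/-- The Hilbert–Schmidt (trace-duality) adjoint of `ψ`. -/
def adjointMap (ψ : MatMap ι κ) : MatMap κ ι where
  toFun A := Matrix.of fun i j => (A * ψ (Matrix.single j i 1)).trace
  map_add' A B := by funext i j; simp [Matrix.add_mul]
  map_smul' c A := by funext i j; simp [Matrix.smul_mul]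

/-- The cq-map associated with a family of operators. -/
def cqMap {n : ℕ} (A : Fin n → Mat ι) : MatMap (Fin n) ι where
  toFun X := ∑ i, X i i • A i
  map_add' X Y := by simp [Matrix.add_apply, add_smul, Finset.sum_add_distrib]
  map_smul' c X := by simp [Matrix.smul_apply, smul_smul, Finset.smul_sum]

/-- The qc-map associated with a family of operators. -/
def qcMap {n : ℕ} (B : Fin n → Mat ι) : MatMap ι (Fin n) where
  toFun X := Matrix.diagonal fun i => (X * B i).trace
  map_add' X Y := by
    funext i j
    by_cases h : i = j <;>
      simp [Matrix.add_mul, Matrix.diagonal, Matrix.of_apply, h]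
  map_smul' c X := by
    funext i j
    by_cases h : i = j <;>
      simp [Matrix.smul_mul, Matrix.diagonal, Matrix.of_apply, h]

/-- A POVM with `n` outcomes. -/
def IsPOVM {n : ℕ} (M : Fin n → Mat ι) : Prop :=
  (∀ i, (M i).PosSemidef) ∧ ∑ i, M i = 1

/-- An ensemble: probabilities with states. -/
def IsEnsemble {n : ℕ} (lam : Fin n → ℝ) (σ : Fin n → Mat ι) : Prop :=
  (∀ i, 0 < lam i) ∧ (∑ i, lam i = 1) ∧ ∀ i, IsState (σ i)

/-- Optimal success probability of guessing among the states of an ensemble. -/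
noncomputable def pSucc {n : ℕ} (lam : Fin n → ℝ) (σ : Fin n → Mat ι) : ℝ :=
  sSup {r : ℝ | ∃ M : Fin n → Mat ι, IsPOVM M ∧
    r = ∑ i, lam i * ((M i * σ i).trace).re}

/-- The square root of a positive semidefinite matrix, as defined in the older Mathlib. -/
def Matrix.PosSemidef.sqrt {n 𝕜 : Type*} [Fintype n] [DecidableEq n] [RCLike 𝕜]
    {A : Matrix n n 𝕜} (hA : A.PosSemidef) : Matrix n n 𝕜 :=
  hA.1.eigenvectorUnitary.1 * Matrix.diagonal ((↑) ∘ (√·) ∘ hA.1.eigenvalues) *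
    (star hA.1.eigenvectorUnitary : Matrix n n 𝕜)

/-- Trace norm `‖A‖₁ = Tr √(AᴴA)`. -/
noncomputable def traceNorm (A : Mat ι) : ℝ :=
  ((Matrix.posSemidef_conjTranspose_mul_self A).sqrt).trace.re

/-- Le Cam deficiency of `Φ` with respect to `Ψ`. -/
noncomputable def deficiency (Φ : MatMap ι κ) (Ψ : MatMap ι μ) : ℝ :=
  sInf {r : ℝ | ∃ α : MatMap μ κ, IsChannel α ∧ r = diamondNorm (Φ - α ∘ₗ Ψ)}

open Matrix Unitary
open scoped MatrixOrder

section TraceNorm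

variable {n 𝕜 : Type*} [Fintype n] [DecidableEq n] [RCLike 𝕜]

lemma Matrix.PosSemidef.sqrt_eq_cfcSqrt {B : Matrix n n 𝕜} (hB : B.PosSemidef) :
    hB.sqrt = CFC.sqrt B := by
  rw [CFC.sqrt_eq_real_sqrt B hB.nonneg, cfcₙ_eq_cfc, hB.1.cfc_eq]
  rfl

lemma Matrix.trace_conjStarAlgAut (u : unitary (Matrix n n 𝕜)) (X : Matrix n n 𝕜) :
    (conjStarAlgAut 𝕜 _ u X).trace = X.trace := by
  rw [conjStarAlgAut_apply, trace_mul_cycle, coe_star_mul_self, one_mul]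

lemma Matrix.IsHermitian.trace_cfcAbs {A : Matrix n n 𝕜} (hA : A.IsHermitian) :
    (CFC.abs A).trace = ∑ i, ((|hA.eigenvalues i| : ℝ) : 𝕜) := by
  rw [CFC.abs_eq_cfc_norm A hA.isSelfAdjoint, hA.cfc_eq, IsHermitian.cfc, trace_conjStarAlgAut,
    trace_diagonal]
  simp

end TraceNorm

variable {ι : Type} [Fintype ι] [DecidableEq ι]

lemma traceNorm_eq_re_trace_cfcAbs (A : Mat ι) : traceNorm A = (CFC.abs A).trace.re := by
  rw [traceNorm, PosSemidef.sqrt_eq_cfcSqrt, CFC.abs, star_eq_conjTranspose]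

lemma Matrix.IsHermitian.traceNorm_eq_sum_abs_eigenvalues {A : Mat ι} (hA : A.IsHermitian) :
    traceNorm A = ∑ i, |hA.eigenvalues i| := by
  rw [traceNorm_eq_re_trace_cfcAbs, hA.trace_cfcAbs, Complex.re_sum]
  rfl

lemma Matrix.IsHermitian.trace_cfcAbs_eq_traceNorm {A : Mat ι} (hA : A.IsHermitian) :
    (CFC.abs A).trace = traceNorm A := by
  rw [hA.trace_cfcAbs, hA.traceNorm_eq_sum_abs_eigenvalues, Complex.ofReal_sum]
  rfl

lemma Matrix.IsHermitian.posSemidef_cfcAbs_sub_self {A : Mat ι} (hA : A.IsHermitian) :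
    (CFC.abs A - A).PosSemidef := by
  rw [CFC.abs_sub_self A hA.isSelfAdjoint, ← nonneg_iff_posSemidef]
  exact nsmul_nonneg (CFC.negPart_nonneg A) 2

lemma Matrix.IsHermitian.posSemidef_cfcAbs_add_self {A : Mat ι} (hA : A.IsHermitian) :
    (CFC.abs A + A).PosSemidef := by
  rw [CFC.abs_add_self A hA.isSelfAdjoint, ← nonneg_iff_posSemidef]
  exact nsmul_nonneg (CFC.posPart_nonneg A) 2

lemma Matrix.IsHermitian.traceNorm_le_re_trace {A B : Mat ι} (hA : A.IsHermitian)
    (hsub : (B - A).PosSemidef) (hadd : (B + A).PosSemidef) : traceNorm A ≤ B.trace.re := by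
  set V := star hA.eigenvectorUnitary
  obtain ⟨C, hC⟩ : ∃ C, conjStarAlgAut ℂ _ V B = C := ⟨_, rfl⟩
  have hdiag : conjStarAlgAut ℂ _ V A = diagonal fun i => (hA.eigenvalues i : ℂ) :=
    hA.conjStarAlgAut_star_eigenvectorUnitary
  have hconj {X : Mat ι} (hX : X.PosSemidef) : (conjStarAlgAut ℂ _ V X).PosSemidef :=
    hX.mul_mul_conjTranspose_same _
  have hentry (j : ι) : |hA.eigenvalues j| ≤ (C j j).re := by
    have esub := (hconj hsub).diag_nonneg (i := j)
    have eadd := (hconj hadd).diag_nonneg (i := j)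
    rw [map_sub, hdiag, hC] at esub
    rw [map_add, hdiag, hC] at eadd
    simp only [sub_apply, add_apply, diagonal_apply_eq, Complex.le_def, Complex.zero_re,
      Complex.sub_re, Complex.add_re, Complex.ofReal_re] at esub eadd
    rw [abs_le]
    constructor <;> linarith [esub.1, eadd.1]
  calc traceNorm A = ∑ j, |hA.eigenvalues j| := hA.traceNorm_eq_sum_abs_eigenvalues
    _ ≤ ∑ j, (C j j).re := Finset.sum_le_sum fun j _ => hentry j
    _ = B.trace.re := by rw [← trace_conjStarAlgAut V B, hC, trace, Complex.re_sum]; rfl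

lemma Matrix.IsHermitian.exists_posSemidef_trace_eq [Nonempty ι] {A : Mat ι}
    (hA : A.IsHermitian) {r : ℝ} (hr : traceNorm A ≤ r) :
    ∃ Q : Mat ι, Q.PosSemidef ∧ (Q - A).PosSemidef ∧ (Q + A).PosSemidef ∧ Q.trace = r := by
  set c : ℝ := (r - traceNorm A) / Fintype.card ι
  have hc : (0 : ℂ) ≤ (c : ℂ) := Complex.zero_le_real.mpr (div_nonneg (by linarith) (by positivity))
  have hI : ((c : ℂ) • (1 : Mat ι)).PosSemidef := PosSemidef.one.smul hc
  refine ⟨CFC.abs A + (c : ℂ) • 1, ?_, ?_, ?_, ?_⟩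
  · exact (nonneg_iff_posSemidef.mp (CFC.abs_nonneg A)).add hI
  · rw [add_sub_right_comm]
    exact hA.posSemidef_cfcAbs_sub_self.add hI
  · rw [add_right_comm]
    exact hA.posSemidef_cfcAbs_add_self.add hI
  · have hcard : (Fintype.card ι : ℝ) ≠ 0 := Nat.cast_ne_zero.mpr Fintype.card_ne_zero
    rw [trace_add, trace_smul, trace_one, hA.trace_cfcAbs_eq_traceNorm, smul_eq_mul]
    simp only [c]
    push_cast
    field_simp
    ring

section CqMap

variable {n : ℕ}

lemma cqMap_apply (A : Fin n → Mat ι) (X : Mat (Fin n)) : cqMap A X = ∑ i, X i i • A i := rfl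

lemma cqMap_single_self (A : Fin n → Mat ι) (i : Fin n) : cqMap A (single i i 1) = A i := by
  simp [cqMap_apply, single_apply]

lemma cqMap_add (A B : Fin n → Mat ι) : cqMap (A + B) = cqMap A + cqMap B := by
  ext X : 1
  simp [cqMap_apply, smul_add, Finset.sum_add_distrib]

lemma cqMap_sub (A B : Fin n → Mat ι) : cqMap (A - B) = cqMap A - cqMap B := by
  ext X : 1
  simp [cqMap_apply, smul_sub, Finset.sum_sub_distrib]

lemma cqMap_smul (c : ℂ) (A : Fin n → Mat ι) : cqMap (c • A) = c • cqMap A := by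
  ext X : 1
  simp [cqMap_apply, Finset.smul_sum, smul_comm c]

lemma trace_cqMap (A : Fin n → Mat ι) (X : Mat (Fin n)) :
    (cqMap A X).trace = ∑ i, X i i * (A i).trace := by
  simp [cqMap_apply, trace_sum, trace_smul]

lemma tensorId_cqMap (A : Fin n → Mat ι) {τ : Type} [Fintype τ] [DecidableEq τ]
    (X : Matrix (Fin n × τ) (Fin n × τ) ℂ) :
    tensorId (cqMap A) τ X = ∑ i, A i ⊗ₖ X.submatrix (Prod.mk i) (Prod.mk i) := by
  ext p q
  simp [tensorId, cqMap_apply, Matrix.sum_apply, kroneckerMap_apply, mul_comm]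

lemma isCP_cqMap {A : Fin n → Mat ι} (hA : ∀ i, (A i).PosSemidef) : IsCP (cqMap A) := by
  intro l X hX
  rw [tensorId_cqMap]
  exact posSemidef_sum _ fun i _ => (hA i).kronecker (hX.submatrix _)

lemma isChannel_cqMap {σ : Fin n → Mat ι} (hσ : ∀ i, IsState (σ i)) : IsChannel (cqMap σ) := by
  refine ⟨isCP_cqMap fun i => (hσ i).1, fun X => ?_⟩
  simp only [trace_cqMap, (hσ _).2, mul_one]
  rfl

end CqMap

lemma Matrix.posSemidef_single_self_one {m : Type*} [DecidableEq m] (i : m) :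
    (single i i (1 : ℂ)).PosSemidef := by
  rw [← diagonal_single]
  exact .diagonal (Pi.single_nonneg.mpr zero_le_one)

lemma IsCP.posSemidef_apply {κ : Type} [Fintype κ] [DecidableEq κ] {φ : MatMap ι κ}
    (hφ : IsCP φ) {Z : Mat ι} (hZ : Z.PosSemidef) : (φ Z).PosSemidef :=
  (hφ 1 _ (hZ.submatrix Prod.fst)).submatrix fun i => (i, 0)

lemma traceNorm_nonneg (A : Mat ι) : 0 ≤ traceNorm A := by
  rw [traceNorm_eq_re_trace_cfcAbs]
  exact Complex.nonneg_iff.mp (nonneg_iff_posSemidef.mp (CFC.abs_nonneg A)).trace_nonneg |>.1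

lemma traceNorm_of_isEmpty [IsEmpty ι] (A : Mat ι) : traceNorm A = 0 := by
  simp [traceNorm, trace]

lemma diamondNorm_of_isEmpty {κ : Type} [Fintype κ] [DecidableEq κ] [Nonempty ι] [IsEmpty κ]
    (φ : MatMap ι κ) : diamondNorm φ = 0 := by
  rw [diamondNorm, ← Real.sInf_empty]
  congr 1
  ext r
  simp only [Set.mem_ofPred_eq, Set.mem_empty_iff_false, iff_false]
  rintro ⟨-, α, ⟨-, hα⟩, -⟩
  have h := hα 1
  simp only [trace, Finset.univ_eq_empty, Finset.sum_empty, diag_one, Pi.one_apply,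
    Finset.sum_const, Finset.card_univ, nsmul_eq_mul, mul_one] at h
  exact Fintype.card_ne_zero (by exact_mod_cast h.symm)

lemma Real.sInf_setOf_pos_and_le {M : ℝ} (hM : 0 ≤ M) : sInf {r : ℝ | 0 < r ∧ M ≤ r} = M := by
  rcases hM.eq_or_lt with rfl | hM
  · rw [show {r : ℝ | 0 < r ∧ 0 ≤ r} = Set.Ioi 0 by ext r; simpa using le_of_lt, csInf_Ioi]
  · rw [show {r : ℝ | 0 < r ∧ M ≤ r} = Set.Ici M by ext r; simpa using hM.trans_le, csInf_Ici]

section DiamondNorm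

variable {n : ℕ} {A : Fin n → Mat ι}

lemma traceNorm_le_of_isCP_smul_sub_of_isCP_smul_add (hA : ∀ i, (A i).IsHermitian) {r : ℝ}
    {α : MatMap (Fin n) ι} (hα : IsTP α) (hsub : IsCP ((r : ℂ) • α - cqMap A))
    (hadd : IsCP ((r : ℂ) • α + cqMap A)) (i : Fin n) : traceNorm (A i) ≤ r := by
  have hsub' := hsub.posSemidef_apply (posSemidef_single_self_one i)
  have hadd' := hadd.posSemidef_apply (posSemidef_single_self_one i)
  simp only [LinearMap.sub_apply, LinearMap.add_apply, LinearMap.smul_apply,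
    cqMap_single_self] at hsub' hadd'
  simpa [trace_smul, hα _, trace_single_eq_same] using (hA i).traceNorm_le_re_trace hsub' hadd'

lemma exists_isChannel_of_traceNorm_le [Nonempty ι] (hA : ∀ i, (A i).IsHermitian) {r : ℝ}
    (hr : 0 < r) (h : ∀ i, traceNorm (A i) ≤ r) :
    ∃ α : MatMap (Fin n) ι, IsChannel α ∧ IsCP ((r : ℂ) • α - cqMap A) ∧
      IsCP ((r : ℂ) • α + cqMap A) := by
  choose Q hQ hsub hadd htr using fun i => (hA i).exists_posSemidef_trace_eq (h i)
  have hr' : (r : ℂ) ≠ 0 := Complex.ofReal_ne_zero.mpr hr.ne'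
  have hrα : (r : ℂ) • cqMap ((r : ℂ)⁻¹ • Q) = cqMap Q := by
    rw [← cqMap_smul, smul_smul, mul_inv_cancel₀ hr', one_smul]
  refine ⟨cqMap ((r : ℂ)⁻¹ • Q), isChannel_cqMap fun i => ⟨?_, ?_⟩, ?_, ?_⟩
  · refine (hQ i).smul (a := (r : ℂ)⁻¹) ?_
    rw [← Complex.ofReal_inv]
    exact Complex.zero_le_real.mpr (inv_nonneg.mpr hr.le)
  · rw [Pi.smul_apply, trace_smul, htr i, smul_eq_mul, inv_mul_cancel₀ hr']
  · rw [hrα, ← cqMap_sub]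
    exact isCP_cqMap hsub
  · rw [hrα, ← cqMap_add]
    exact isCP_cqMap hadd

end DiamondNorm

theorem diamondNorm_cqMap {n k : ℕ} [NeZero n] (A : Fin n → Mat (Fin k))
    (hA : ∀ i, (A i).IsHermitian) :
    diamondNorm (cqMap A)
      = Finset.univ.sup' Finset.univ_nonempty (fun i => traceNorm (A i)) := by
  rcases isEmpty_or_nonempty (Fin k) with hk | hk
  · simp [diamondNorm_of_isEmpty, traceNorm_of_isEmpty]
  have hM : 0 ≤ Finset.univ.sup' Finset.univ_nonempty (fun i => traceNorm (A i)) :=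
    (traceNorm_nonneg (A 0)).trans (Finset.le_sup' (fun i => traceNorm (A i)) (Finset.mem_univ 0))
  rw [diamondNorm, ← Real.sInf_setOf_pos_and_le hM]
  congr 1
  ext r
  simp only [Set.mem_ofPred_eq, Finset.sup'_le_iff, Finset.mem_univ, true_implies]
  exact ⟨fun ⟨hr, _, hα, hsub, hadd⟩ =>
      ⟨hr, traceNorm_le_of_isCP_smul_sub_of_isCP_smul_add hA hα.2 hsub hadd⟩,
    fun ⟨hr, h⟩ => ⟨hr, exists_isChannel_of_traceNorm_le hA hr h⟩⟩
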